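/- Let G be a group and B a type. Then G-transitions on surjective covers of B, together with G-transition morphisms, form a category: each G-transition g is itself a G-transition morphism from g to g (taking b = g, with σ and δ both given by the cocycle law) and serves as an identity, i.e. g;b = b and b;g' = b for every G-transition morphism b from g to g'; and composition is associative, i.e. (b;b');b'' = b;(b';b'') for composable transition morphisms b, b', b''. -/
import Mathlib


universe u

structure GTransition (G : Type u) [Group G] {U B : Type u} (j : U → B) where
  g : ∀ x y : U, j x = j y → G
  cocycle : ∀ (x y z : U) (hxy : j x = j y) (hyz : j y = j z),
    g x y hxy * g y z hyz = g x z (hxy.trans hyz)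

structure GTransMor {G : Type u} [Group G] {B U U' : Type u} {j : U → B} {j' : U' → B}
    (t : GTransition G j) (t' : GTransition G j') where
  b : ∀ (x : U) (x' : U'), j x = j' x' → G
  sigma : ∀ (x y : U) (x' : U') (hxy : j x = j y) (hyx' : j y = j' x'),
    t.g x y hxy * b y x' hyx' = b x x' (hxy.trans hyx')
  delta : ∀ (x : U) (x' y' : U') (hxx' : j x = j' x') (hx'y' : j' x' = j' y'),
    b x x' hxx' * t'.g x' y' hx'y' = b x y' (hxx'.trans hx'y')

/-- Each `G`-transition is itself a `G`-transition morphism from itself to itself,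
taking `b = g`, with `σ` and `δ` both given by the cocycle law. -/
def GTransition.idMor {G : Type u} [Group G] {U B : Type u} {j : U → B}
    (t : GTransition G j) : GTransMor t t :=
  ⟨t.g, t.cocycle, t.cocycle⟩

noncomputable def GTransMor.comp {G : Type u} [Group G] {B U U' U'' : Type u}
    {j : U → B} {j' : U' → B} {j'' : U'' → B}
    {t : GTransition G j} {t' : GTransition G j'} {t'' : GTransition G j''}
    (hj' : Function.Surjective j')
    (bb : GTransMor t t') (bb' : GTransMor t' t'') : GTransMor t t'' where
  b x x'' h :=
    bb.b x (Function.surjInv hj' (j x)) (Function.surjInv_eq hj' (j x)).symm *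
      bb'.b (Function.surjInv hj' (j x)) x'' ((Function.surjInv_eq hj' (j x)).trans h)
  sigma := by
    intro x y x'' hxy hyx''
    have hmx : j' (Function.surjInv hj' (j x)) = j x := Function.surjInv_eq hj' (j x)
    have hmy : j' (Function.surjInv hj' (j y)) = j y := Function.surjInv_eq hj' (j y)
    have h1 : j' (Function.surjInv hj' (j y)) = j' (Function.surjInv hj' (j x)) := by
      rw [hmx, hmy, hxy]
    have h2 : j' (Function.surjInv hj' (j x)) = j'' x'' := by rw [hmx, hxy]; exact hyx''
    have e1 := bb'.sigma (Function.surjInv hj' (j y)) (Function.surjInv hj' (j x)) x'' h1 h2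
    have e2 := bb.delta y (Function.surjInv hj' (j y)) (Function.surjInv hj' (j x))
      hmy.symm h1
    have e3 := bb.sigma x y (Function.surjInv hj' (j x)) hxy (hxy.symm.trans hmx.symm)
    calc t.g x y hxy *
          (bb.b y (Function.surjInv hj' (j y)) hmy.symm *
            bb'.b (Function.surjInv hj' (j y)) x'' (hmy.trans hyx''))
        = t.g x y hxy *
          (bb.b y (Function.surjInv hj' (j y)) hmy.symm *
            (t'.g (Function.surjInv hj' (j y)) (Function.surjInv hj' (j x)) h1 *
              bb'.b (Function.surjInv hj' (j x)) x'' h2)) := by rw [e1]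
      _ = t.g x y hxy *
          ((bb.b y (Function.surjInv hj' (j y)) hmy.symm *
            t'.g (Function.surjInv hj' (j y)) (Function.surjInv hj' (j x)) h1) *
              bb'.b (Function.surjInv hj' (j x)) x'' h2) := by rw [mul_assoc]
      _ = t.g x y hxy *
          (bb.b y (Function.surjInv hj' (j x)) (hmy.symm.trans h1) *
              bb'.b (Function.surjInv hj' (j x)) x'' h2) := by rw [e2]
      _ = (t.g x y hxy * bb.b y (Function.surjInv hj' (j x)) (hmy.symm.trans h1)) *
              bb'.b (Function.surjInv hj' (j x)) x'' h2 := by rw [mul_assoc]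
      _ = bb.b x (Function.surjInv hj' (j x)) (Function.surjInv_eq hj' (j x)).symm *
          bb'.b (Function.surjInv hj' (j x)) x''
            ((Function.surjInv_eq hj' (j x)).trans (hxy.trans hyx'')) := by rw [e3]
  delta := by
    intro x x'' y'' hxx'' hx''y''
    rw [mul_assoc, bb'.delta (Function.surjInv hj' (j x)) x'' y''
      ((Function.surjInv_eq hj' (j x)).trans hxx'') hx''y'']

private lemma GTransMor.ext' {G : Type u} [Group G] {B U U' : Type u} {j : U → B} {j' : U' → B}
    {t : GTransition G j} {t' : GTransition G j'} {bb bb' : GTransMor t t'}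
    (h : bb.b = bb'.b) : bb = bb' := by
  cases bb; cases bb'; cases h; rfl

/-- `G`-transitions on surjective covers of `B` and `G`-transition
morphisms form a category: each `g` serves as its own identity (`g;b = b` and
`b;g' = b`), and composition is associative. -/
theorem stmt8 {G : Type u} [Group G] {B U U' U'' U''' : Type u}
    {j : U → B} {j' : U' → B} {j'' : U'' → B} {j''' : U''' → B}
    (hj : Function.Surjective j) (hj' : Function.Surjective j')
    (hj'' : Function.Surjective j'')
    (t : GTransition G j) (t' : GTransition G j') (t'' : GTransition G j'')
    (t''' : GTransition G j''') :
    (∀ bb : GTransMor t t',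
      GTransMor.comp hj t.idMor bb = bb ∧ GTransMor.comp hj' bb t'.idMor = bb) ∧
    (∀ (bb : GTransMor t t') (bb' : GTransMor t' t'') (bb'' : GTransMor t'' t'''),
      GTransMor.comp hj'' (GTransMor.comp hj' bb bb') bb'' =
        GTransMor.comp hj' bb (GTransMor.comp hj'' bb' bb'')) := by
  refine ⟨fun bb => ⟨?_, ?_⟩, fun bb bb' bb'' => ?_⟩
  · apply GTransMor.ext'
    funext x x'' h
    exact bb.sigma _ _ _ _ _
  · apply GTransMor.ext'
    funext x x'' h
    exact bb.delta _ _ _ _ _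
  · apply GTransMor.ext'
    funext x x''' h
    show (bb.b x _ _ * bb'.b _ _ _) * bb''.b _ _ _ =
      bb.b x _ _ * (bb'.b _ _ _ * bb''.b _ _ _)
    set m' := Function.surjInv hj' (j x) with hm'
    set m'' := Function.surjInv hj'' (j x) with hm''
    set m₂ := Function.surjInv hj'' (j' m') with hm₂
    have e1 : j' m' = j x := Function.surjInv_eq hj' (j x)
    have e2 : j'' m'' = j x := Function.surjInv_eq hj'' (j x)
    have e3 : j'' m₂ = j' m' := Function.surjInv_eq hj'' (j' m')
    have hA : j' m' = j'' m'' := by rw [e1, e2]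
    have hB : j'' m'' = j'' m₂ := by rw [e2, e3, e1]
    have d1 : bb'.b m' m'' hA * t''.g m'' m₂ hB = bb'.b m' m₂ (hA.trans hB) :=
      bb'.delta _ _ _ _ _
    have s1 : t''.g m'' m₂ hB *
        bb''.b m₂ x''' ((hA.trans hB).symm.trans (hA.trans (e2.trans h))) =
        bb''.b m'' x''' (hB.trans ((hA.trans hB).symm.trans (hA.trans (e2.trans h)))) :=
      bb''.sigma _ _ _ _ _
    have key : bb'.b m' m₂ (hA.trans hB) *
        bb''.b m₂ x''' ((hA.trans hB).symm.trans (hA.trans (e2.trans h))) =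
        bb'.b m' m'' hA * bb''.b m'' x''' (e2.trans h) := by
      rw [← d1, mul_assoc, s1]
    rw [mul_assoc]
    exact (congrArg (bb.b x m' e1.symm * ·) key).symm
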